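/- Every 5-basket is (2P_3, C_4, C_6, C_7, T_0)-free and contains an induced 3-pentagon. Moreover, every 5-basket is anticonnected and contains no simplicial and no universal vertices. -/

import Mathlib

namespace Paper

open SimpleGraph

variable {V : Type} {W : Type}

/-- `G` contains no induced copy of `H` (there is no graph embedding of `H` into `G`). -/
def IndFree (G : SimpleGraph V) (H : SimpleGraph W) : Prop :=
  IsEmpty (H ↪g G)

/-- `2P₃`: the disjoint union of two paths on three vertices. -/
def twoP3 : SimpleGraph (Fin 3 ⊕ Fin 3) :=
  SimpleGraph.fromRel (fun u v =>
    match u, v with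
    | Sum.inl a, Sum.inl b => (pathGraph 3).Adj a b
    | Sum.inr a, Sum.inr b => (pathGraph 3).Adj a b
    | _, _ => False)

/-- `4K₁`: the edgeless graph on four vertices. -/
def fourK1 : SimpleGraph (Fin 4) := ⊥

/-- The cycle on `n` vertices (for `n ≥ 3`). -/
def cycleG (n : ℕ) : SimpleGraph (ZMod n) :=
  SimpleGraph.fromRel (fun u v => v = u + 1)

/-- The graph `T₀`: vertices `0,…,8` stand for `a₀,a₁,b₀,b₁,b₂,b₃,c₁,c₂,c₃`. -/
def T0 : SimpleGraph (Fin 9) :=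
  SimpleGraph.fromRel (fun u v =>
    (u, v) ∈ ([(0,1),(0,2),(0,4),(0,5),(1,3),(1,4),(1,5),(2,6),(3,6),
               (4,7),(5,8),(6,7),(6,8),(7,8)] : List (Fin 9 × Fin 9)))

/-- The `t`-pentagon: `Sum.inl ()` is the vertex `a`, `Sum.inr (Sum.inl i)` is `bᵢ`,
and `Sum.inr (Sum.inr i)` is `cᵢ`. -/
def pentagon (t : ℕ) : SimpleGraph (Unit ⊕ Fin t ⊕ Fin t) :=
  SimpleGraph.fromRel (fun u v =>
    match u, v with
    | Sum.inl _, Sum.inr (Sum.inl _) => True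
    | Sum.inr (Sum.inl i), Sum.inr (Sum.inr j) => i = j
    | Sum.inr (Sum.inr _), Sum.inr (Sum.inr _) => True
    | _, _ => False)

/-- `X` is complete to `Y` in `G`. -/
def CompleteTo (G : SimpleGraph V) (X Y : Set V) : Prop :=
  ∀ x ∈ X, ∀ y ∈ Y, G.Adj x y

/-- `X` is anticomplete to `Y` in `G`. -/
def AnticompleteTo (G : SimpleGraph V) (X Y : Set V) : Prop :=
  ∀ x ∈ X, ∀ y ∈ Y, ¬ G.Adj x y

/-- A simplicial vertex: its neighborhood is a clique. -/
def IsSimplicial (G : SimpleGraph V) (v : V) : Prop :=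
  G.IsClique (G.neighborSet v)

/-- A universal vertex: adjacent to all other vertices. -/
def IsUniversal (G : SimpleGraph V) (v : V) : Prop :=
  ∀ w, w ≠ v → G.Adj v w

/-- A 5-basket partition `(A; B 0, B 1, B 2; C 0, C 1, C 2; F)` of `Q`. -/
def IsFiveBasketPartition (Q : SimpleGraph W) (A : Set W) (B C : Fin 3 → Set W)
    (F : Set W) : Prop :=
  (∀ i, Disjoint A (B i)) ∧ (∀ i, Disjoint A (C i)) ∧ Disjoint A F ∧
  (∀ i j, i ≠ j → Disjoint (B i) (B j)) ∧
  (∀ i j, i ≠ j → Disjoint (C i) (C j)) ∧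
  (∀ i j, Disjoint (B i) (C j)) ∧
  (∀ i, Disjoint (B i) F) ∧ (∀ i, Disjoint (C i) F) ∧
  (A ∪ (⋃ i, B i) ∪ (⋃ i, C i) ∪ F = Set.univ) ∧
  Q.IsClique A ∧ (∀ i, Q.IsClique (B i)) ∧ (∀ i, Q.IsClique (C i)) ∧ Q.IsClique F ∧
  A.Nonempty ∧ (∀ i, (B i).Nonempty) ∧ (∀ i, (C i).Nonempty) ∧
  (∀ i j, i ≠ j → AnticompleteTo Q (B i) (B j)) ∧
  (∀ i j, i ≠ j → CompleteTo Q (C i) (C j)) ∧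
  (∀ i, AnticompleteTo Q A (C i)) ∧
  (∀ i, CompleteTo Q (B i) (C i)) ∧
  (∀ i j, i ≠ j → AnticompleteTo Q (B i) (C j)) ∧
  (∃ istar : Fin 3,
    (∀ i, i ≠ istar → CompleteTo Q A (B i)) ∧
    (∀ a ∈ A, ∀ a' ∈ A,
      Q.neighborSet a ∩ B istar ⊆ Q.neighborSet a' ∩ B istar ∨
      Q.neighborSet a' ∩ B istar ⊆ Q.neighborSet a ∩ B istar) ∧
    (∃ a ∈ A, B istar ⊆ Q.neighborSet a)) ∧
  (∃ jstar : Fin 3,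
    CompleteTo Q F (B jstar ∪ C jstar ∪ F)ᶜ ∧
    AnticompleteTo Q F (B jstar ∪ C jstar))

/-- A 5-basket. -/
def IsFiveBasket (Q : SimpleGraph W) : Prop :=
  ∃ (A : Set W) (B C : Fin 3 → Set W) (F : Set W), IsFiveBasketPartition Q A B C F

/-- All conditions of a `t`-villa partition except that the parts exhaust the vertex set. -/
def VillaCore {t : ℕ} (Q : SimpleGraph W) (A : Set W) (B C : Fin t → Set W) : Prop :=
  (∀ i, Disjoint A (B i)) ∧ (∀ i, Disjoint A (C i)) ∧
  (∀ i j, i ≠ j → Disjoint (B i) (B j)) ∧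
  (∀ i j, i ≠ j → Disjoint (C i) (C j)) ∧
  (∀ i j, Disjoint (B i) (C j)) ∧
  Q.IsClique A ∧ (∀ i, Q.IsClique (B i)) ∧ (∀ i, Q.IsClique (C i)) ∧
  A.Nonempty ∧ (∀ i, (B i).Nonempty) ∧ (∀ i, (C i).Nonempty) ∧
  (∀ i, CompleteTo Q A (B i)) ∧ (∀ i, AnticompleteTo Q A (C i)) ∧
  (∀ i j, i ≠ j → AnticompleteTo Q (B i) (B j)) ∧
  (∀ i j, i ≠ j → CompleteTo Q (C i) (C j)) ∧
  (∀ i j, i ≠ j → AnticompleteTo Q (B i) (C j)) ∧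
  (∀ i, ∀ b ∈ B i, ∀ b' ∈ B i,
     Q.neighborSet b ∩ C i ⊆ Q.neighborSet b' ∩ C i ∨
     Q.neighborSet b' ∩ C i ⊆ Q.neighborSet b ∩ C i) ∧
  (∀ i, ∀ b ∈ B i, (Q.neighborSet b ∩ C i).Nonempty) ∧
  (∀ i, ∃ b ∈ B i, C i ⊆ Q.neighborSet b)

/-- A `t`-villa partition `(A; B 0,…,B (t-1); C 0,…,C (t-1))` of `Q`. -/
def IsVillaPartition {t : ℕ} (Q : SimpleGraph W) (A : Set W) (B C : Fin t → Set W) : Prop :=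
  VillaCore Q A B C ∧ A ∪ (⋃ i, B i) ∪ (⋃ i, C i) = Set.univ

/-- A `t`-villa. -/
def IsTVilla (t : ℕ) (Q : SimpleGraph W) : Prop :=
  ∃ (A : Set W) (B C : Fin t → Set W), IsVillaPartition Q A B C

/-- A villa: a `t`-villa for some `t ≥ 3`. -/
def IsVilla (Q : SimpleGraph W) : Prop :=
  ∃ t, 3 ≤ t ∧ IsTVilla t Q

/-- A `t`-mansion partition `(A; B; C; F; X; Y)` of `Q`. -/
def IsMansionPartition {t : ℕ} (Q : SimpleGraph W) (A : Set W) (B C : Fin t → Set W)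
    (F X Y : Set W) : Prop :=
  VillaCore Q A B C ∧
  Disjoint A F ∧ Disjoint A X ∧ Disjoint A Y ∧
  (∀ i, Disjoint (B i) F) ∧ (∀ i, Disjoint (B i) X) ∧ (∀ i, Disjoint (B i) Y) ∧
  (∀ i, Disjoint (C i) F) ∧ (∀ i, Disjoint (C i) X) ∧ (∀ i, Disjoint (C i) Y) ∧
  Disjoint F X ∧ Disjoint F Y ∧ Disjoint X Y ∧
  (A ∪ (⋃ i, B i) ∪ (⋃ i, C i) ∪ F ∪ X ∪ Y = Set.univ) ∧
  Q.IsClique F ∧ Q.IsClique X ∧ Q.IsClique Y ∧ F.Nonempty ∧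
  (∃ jstar : Fin t,
    CompleteTo Q F A ∧
    (∀ i, i ≠ jstar → CompleteTo Q F (B i)) ∧
    (∀ i, i ≠ jstar → CompleteTo Q F (C i)) ∧
    AnticompleteTo Q F (B jstar) ∧ AnticompleteTo Q F (C jstar) ∧
    CompleteTo Q (B jstar) (C jstar) ∧
    CompleteTo Q X A ∧ CompleteTo Q X (B jstar) ∧
    (∀ i, i ≠ jstar → AnticompleteTo Q X (B i)) ∧
    (∀ i, AnticompleteTo Q X (C i))) ∧
  CompleteTo Q F X ∧ CompleteTo Q F Y ∧
  AnticompleteTo Q X Y ∧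
  (∀ i, CompleteTo Q Y (C i)) ∧
  AnticompleteTo Q Y A ∧ (∀ i, AnticompleteTo Q Y (B i))

/-- A `t`-mansion. -/
def IsTMansion (t : ℕ) (Q : SimpleGraph W) : Prop :=
  ∃ (A : Set W) (B C : Fin t → Set W) (F X Y : Set W),
    IsMansionPartition Q A B C F X Y

/-- A mansion: a `t`-mansion for some `t ≥ 3`. -/
def IsMansion (Q : SimpleGraph W) : Prop :=
  ∃ t, 3 ≤ t ∧ IsTMansion t Q

/-- A `t`-frame partition of `Q`. -/
def IsFramePartition {t : ℕ} (Q : SimpleGraph W) (A : Set W) (B C : Fin t → Set W) : Prop :=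
  (∀ i, Disjoint A (B i)) ∧ (∀ i, Disjoint A (C i)) ∧
  (∀ i j, i ≠ j → Disjoint (B i) (B j)) ∧
  (∀ i j, i ≠ j → Disjoint (C i) (C j)) ∧
  (∀ i j, Disjoint (B i) (C j)) ∧
  (A ∪ (⋃ i, B i) ∪ (⋃ i, C i) = Set.univ) ∧
  A.Nonempty ∧ (∀ i, (B i).Nonempty) ∧ (∀ i, (C i).Nonempty) ∧
  (∀ a ∈ A, ∃ i j : Fin t, i ≠ j ∧ (∃ b ∈ B i, Q.Adj a b) ∧ (∃ b ∈ B j, Q.Adj a b)) ∧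
  (∀ i, AnticompleteTo Q A (C i)) ∧
  (∀ i j, i ≠ j → AnticompleteTo Q (B i) (B j)) ∧
  (∀ i j, i ≠ j → CompleteTo Q (C i) (C j)) ∧
  (∀ i j, i ≠ j → AnticompleteTo Q (B i) (C j)) ∧
  (∀ i, ∀ b ∈ B i, ∃ a ∈ A, Q.Adj b a) ∧
  (∀ i, ∀ b ∈ B i, ∃ c ∈ C i, Q.Adj b c) ∧
  (∀ i, ∀ c ∈ C i, ∃ b ∈ B i, Q.Adj c b)

/-- A `k`-ring partition of `Q` (indices modulo `k`). -/
def IsRingPartition {k : ℕ} (Q : SimpleGraph W) (X : ZMod k → Set W) : Prop :=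
  (∀ i j, i ≠ j → Disjoint (X i) (X j)) ∧
  (⋃ i, X i) = Set.univ ∧
  (∀ i, (X i).Nonempty) ∧
  (∀ i, ∀ u ∈ X i, X i ⊆ insert u (Q.neighborSet u)) ∧
  (∀ i, ∀ u ∈ X i, ∀ u' ∈ X i,
     insert u (Q.neighborSet u) ⊆ insert u' (Q.neighborSet u') ∨
     insert u' (Q.neighborSet u') ⊆ insert u (Q.neighborSet u)) ∧
  (∀ i, ∀ u ∈ X i, insert u (Q.neighborSet u) ⊆ X (i-1) ∪ X i ∪ X (i+1)) ∧
  (∀ i, ∃ u ∈ X i, X (i-1) ∪ X i ∪ X (i+1) ⊆ insert u (Q.neighborSet u))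

/-- A `k`-ring. -/
def IsRing (k : ℕ) (Q : SimpleGraph W) : Prop :=
  ∃ X : ZMod k → Set W, IsRingPartition Q X

/-- A 5-crown. -/
def IsFiveCrown (Q : SimpleGraph W) : Prop :=
  ∃ X : ZMod 5 → Set W, IsRingPartition Q X ∧
    ∃ istar : ZMod 5, CompleteTo Q (X (istar - 1)) (X (istar - 2)) ∧
      CompleteTo Q (X (istar + 1)) (X (istar + 2))

/-!
The vertex set of a 5-basket is covered by the four cliques `A ∪ F` and `B i ∪ C i`, so a stable
set of size four would meet each of them. A vertex of `F` is complete to two of the cliques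
`B i ∪ C i`, and a vertex of `A` is complete to two of the `B i`, which would leave two vertices
of the clique `C` in the stable set. So there is no `4K₁`, hence no `2P₃` and no `T₀`.

Two nonadjacent vertices always have a clique as common neighbourhood, which excludes `C₄`.

A hole of length at least six avoids `F`, whose non-neighbourhood is a clique, and is not
contained in `B ∪ C`, where `C` is a clique and each vertex of `B i` sees only the clique
`B i ∪ C i`; so it passes through some `a ∈ A`. The non-neighbours of `a` lie in `B istar ∪ C`,
where the only induced `P₃` is `b - c - c'` with `b ∈ B istar` and `c ∈ C istar`. Comparing the
`P₃`s of the hole missed by `a` and by its neighbours on the hole gives a contradiction.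
-/

lemma IndFree.of_embedding {U : Type} {G : SimpleGraph V} {H : SimpleGraph W} {H' : SimpleGraph U}
    (hG : IndFree G H) (f : H ↪g H') : IndFree G H' :=
  ⟨fun e => hG.false (f.trans e)⟩

def fourK1EmbeddingTwoP3 : fourK1 ↪g twoP3 :=
  ⟨⟨![.inl 0, .inl 2, .inr 0, .inr 2], by decide⟩, by
    intro a b
    fin_cases a <;> fin_cases b <;> simp [twoP3, fourK1, pathGraph_adj]⟩

def fourK1EmbeddingT0 : fourK1 ↪g T0 :=
  ⟨⟨![2, 3, 4, 5], by decide⟩, by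
    intro a b
    simp only [T0, fourK1, fromRel_adj, bot_adj, iff_false]
    revert a b
    decide⟩

lemma exists_apply_mem_of_isClique_cover {ι α : Type} [Fintype ι] [Fintype α]
    {G : SimpleGraph V} (P : ι → Set V) (hP : ∀ i, G.IsClique (P i)) (hcover : ∀ v, ∃ i, v ∈ P i)
    (e : (⊥ : SimpleGraph α) ↪g G) (hcard : Fintype.card ι ≤ Fintype.card α) (i : ι) :
    ∃ a, e a ∈ P i := by
  choose s hs using fun a => hcover (e a)
  have hs_inj : Function.Injective s := by
    intro a b hab
    by_contra hne
    exact e.map_adj_iff.1 (hP (s a) (hs a) (hab ▸ hs b) (e.injective.ne hne))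
  have hs_bij := (Fintype.bijective_iff_injective_and_card s).2
    ⟨hs_inj, (Fintype.card_le_of_injective s hs_inj).antisymm hcard⟩
  obtain ⟨a, rfl⟩ := hs_bij.2 i
  exact ⟨a, hs a⟩

lemma not_adj_of_compl_adj {G : SimpleGraph V} {x y : V} (h : Gᶜ.Adj x y) : ¬G.Adj x y :=
  ((compl_adj G x y).1 h).2

lemma isClique_union_of_adj {G : SimpleGraph V} {s t : Set V} (hs : G.IsClique s)
    (ht : G.IsClique t) (h : ∀ x ∈ s, ∀ y ∈ t, x ≠ y → G.Adj x y) : G.IsClique (s ∪ t) :=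
  Set.pairwise_union.2 ⟨hs, ht, fun x hx y hy hxy => ⟨h x hx y hy hxy, (h x hx y hy hxy).symm⟩⟩

section Cycle

variable {n : ℕ}

lemma cycleG_adj {x y : ZMod n} : (cycleG n).Adj x y ↔ x ≠ y ∧ (y = x + 1 ∨ x = y + 1) :=
  fromRel_adj ..

instance : DecidableRel (cycleG n).Adj := fun _ _ => decidable_of_iff' _ cycleG_adj

lemma cycleG_adj_natCast_iff {i j : ℕ} (hi : i < n) (hj : j < n) :
    (cycleG n).Adj i j ↔
      i ≠ j ∧ (i + 1 = j ∨ j + 1 = i ∨ i + 1 = n ∧ j = 0 ∨ j + 1 = n ∧ i = 0) := by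
  have hsucc : ∀ {a b : ℕ}, a < n → b < n →
      ((b : ZMod n) = a + 1 ↔ a + 1 = b ∨ a + 1 = n ∧ b = 0) := by
    intro a b ha hb
    rw [← Nat.cast_succ, ZMod.natCast_eq_natCast_iff', Nat.mod_eq_of_lt hb]
    rcases (Nat.succ_le_of_lt ha).lt_or_eq with h | h
    · rw [Nat.mod_eq_of_lt h]
      omega
    · rw [h, Nat.mod_self]
      omega
  rw [cycleG_adj, hsucc hi hj, hsucc hj hi, Ne, ZMod.natCast_eq_natCast_iff',
    Nat.mod_eq_of_lt hi, Nat.mod_eq_of_lt hj]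
  omega

def cycleGAddRight (k : ZMod n) : cycleG n ≃g cycleG n where
  toEquiv := Equiv.addRight k
  map_rel_iff' {x y} := by
    simp only [Equiv.coe_addRight, cycleG_adj, ne_eq, add_left_inj, add_right_comm _ k 1]

def cycleGNeg : cycleG n ≃g cycleG n where
  toEquiv := Equiv.neg _
  map_rel_iff' {x y} := by
    simp only [Equiv.neg_apply, cycleG_adj, ne_eq, neg_inj]
    constructor <;> rintro ⟨hne, h | h⟩ <;> refine ⟨hne, ?_⟩
    · exact Or.inr (by linear_combination h)
    · exact Or.inl (by linear_combination h)
    · exact Or.inr (by linear_combination h)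
    · exact Or.inl (by linear_combination h)

variable {G : SimpleGraph V}

def cycleRotate (e : cycleG n ↪g G) (k : ZMod n) : cycleG n ↪g G :=
  (cycleGAddRight k).toEmbedding.trans e

def cycleReflect (e : cycleG n ↪g G) : cycleG n ↪g G :=
  cycleGNeg.toEmbedding.trans e

@[simp]
lemma cycleRotate_apply (e : cycleG n ↪g G) (k x : ZMod n) : cycleRotate e k x = e (x + k) := rfl

@[simp]
lemma cycleReflect_apply (e : cycleG n ↪g G) (x : ZMod n) : cycleReflect e x = e (-x) := rfl

lemma cycle_adj (e : cycleG n ↪g G) (i j : ℕ) (h : i + 1 = j ∧ j < n := by omega) :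
    G.Adj (e i) (e j) :=
  e.map_adj_iff.2 ((cycleG_adj_natCast_iff (by omega) h.2).2 (by omega))

lemma cycle_compl_adj (e : cycleG n ↪g G) (i j : ℕ)
    (h : i + 2 ≤ j ∧ j < n ∧ j + 2 ≤ n + i := by omega) : Gᶜ.Adj (e i) (e j) := by
  refine (compl_adj G _ _).2 ⟨fun hij => ?_, e.map_adj_iff.not.2 ?_⟩
  · have := (ZMod.natCast_eq_natCast_iff' i j n).1 (e.injective hij)
    rw [Nat.mod_eq_of_lt (by omega), Nat.mod_eq_of_lt h.2.1] at this
    omega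
  · rw [cycleG_adj_natCast_iff (by omega) h.2.1]
    omega

end Cycle

lemma fin_three_add_one_ne : ∀ i : Fin 3, i + 1 ≠ i := by decide

lemma fin_three_add_two_ne : ∀ i : Fin 3, i + 2 ≠ i := by decide

lemma fin_three_add_one_ne_add_two : ∀ i : Fin 3, i + 1 ≠ i + 2 := by decide

/-- A 5-basket partition with the indices `istar`, `jstar` chosen and the (anti)completeness
conditions, including those of `F` to the other parts, spelled out as adjacency rules. -/
structure FiveBasketPartition (Q : SimpleGraph W) where
  A : Set W
  B : Fin 3 → Set W
  C : Fin 3 → Set W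
  F : Set W
  istar : Fin 3
  jstar : Fin 3
  mem_cover : ∀ v, v ∈ A ∨ (∃ i, v ∈ B i) ∨ (∃ i, v ∈ C i) ∨ v ∈ F
  disjoint_A_C : ∀ i, Disjoint A (C i)
  disjoint_B_B : ∀ i j, i ≠ j → Disjoint (B i) (B j)
  disjoint_B_C : ∀ i j, Disjoint (B i) (C j)
  isClique_A : Q.IsClique A
  isClique_B : ∀ i, Q.IsClique (B i)
  isClique_C : ∀ i, Q.IsClique (C i)
  isClique_F : Q.IsClique F
  nonempty_A : A.Nonempty
  nonempty_B : ∀ i, (B i).Nonempty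
  nonempty_C : ∀ i, (C i).Nonempty
  not_adj_B_B : ∀ {i j x y}, i ≠ j → x ∈ B i → y ∈ B j → ¬Q.Adj x y
  adj_C_C : ∀ {i j x y}, i ≠ j → x ∈ C i → y ∈ C j → Q.Adj x y
  not_adj_A_C : ∀ {i x y}, x ∈ A → y ∈ C i → ¬Q.Adj x y
  adj_B_C : ∀ {i x y}, x ∈ B i → y ∈ C i → Q.Adj x y
  not_adj_B_C : ∀ {i j x y}, i ≠ j → x ∈ B i → y ∈ C j → ¬Q.Adj x y
  adj_A_B : ∀ {i x y}, i ≠ istar → x ∈ A → y ∈ B i → Q.Adj x y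
  nested : ∀ {a a'}, a ∈ A → a' ∈ A →
    (∀ b ∈ B istar, Q.Adj a b → Q.Adj a' b) ∨ (∀ b ∈ B istar, Q.Adj a' b → Q.Adj a b)
  exists_adj_B_istar : ∃ a ∈ A, ∀ b ∈ B istar, Q.Adj a b
  adj_F_A : ∀ {x y}, x ∈ F → y ∈ A → Q.Adj x y
  adj_F_B : ∀ {i x y}, i ≠ jstar → x ∈ F → y ∈ B i → Q.Adj x y
  adj_F_C : ∀ {i x y}, i ≠ jstar → x ∈ F → y ∈ C i → Q.Adj x y
  not_adj_F_B : ∀ {x y}, x ∈ F → y ∈ B jstar → ¬Q.Adj x y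
  not_adj_F_C : ∀ {x y}, x ∈ F → y ∈ C jstar → ¬Q.Adj x y

lemma IsFiveBasketPartition.nonempty {Q : SimpleGraph W} {A : Set W} {B C : Fin 3 → Set W}
    {F : Set W} (h : IsFiveBasketPartition Q A B C F) : Nonempty (FiveBasketPartition Q) := by
  obtain ⟨hAB, hAC, hAF, hBB, hCC, hBC, hBF, hCF, hcover, hA, hB, hC, hF, hneA, hneB, hneC,
    haBB, hcCC, haAC, hcBC, haBC, ⟨istar, hcAB, hnest, a, ha, haB⟩, ⟨jstar, hcF, haF⟩⟩ := h
  have hF_compl : ∀ {v}, v ∉ B jstar → v ∉ C jstar → v ∉ F → ∀ f ∈ F, Q.Adj f v :=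
    fun hvB hvC hvF f hf => hcF f hf _ fun hv => by rcases hv with (hv | hv) | hv <;> contradiction
  refine ⟨{
    A, B, C, F, istar, jstar
    disjoint_A_C := hAC
    disjoint_B_B := hBB
    disjoint_B_C := hBC
    isClique_A := hA
    isClique_B := hB
    isClique_C := hC
    isClique_F := hF
    nonempty_A := hneA
    nonempty_B := hneB
    nonempty_C := hneC
    mem_cover := ?_
    nested := ?_
    exists_adj_B_istar := ⟨a, ha, haB⟩
    not_adj_B_B := fun hij hx hy => haBB _ _ hij _ hx _ hy
    adj_C_C := fun hij hx hy => hcCC _ _ hij _ hx _ hy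
    not_adj_A_C := fun hx hy => haAC _ _ hx _ hy
    adj_B_C := fun hx hy => hcBC _ _ hx _ hy
    not_adj_B_C := fun hij hx hy => haBC _ _ hij _ hx _ hy
    adj_A_B := fun hi hx hy => hcAB _ hi _ hx _ hy
    adj_F_A := fun hx hy => hF_compl ((hAB jstar).notMem_of_mem_left hy)
      ((hAC jstar).notMem_of_mem_left hy) (hAF.notMem_of_mem_left hy) _ hx
    adj_F_B := fun hi hx hy => hF_compl ((hBB _ _ hi).notMem_of_mem_left hy)
      ((hBC _ _).notMem_of_mem_left hy) ((hBF _).notMem_of_mem_left hy) _ hx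
    adj_F_C := fun hi hx hy => hF_compl ((hBC _ _).notMem_of_mem_right hy)
      ((hCC _ _ hi).notMem_of_mem_left hy) ((hCF _).notMem_of_mem_left hy) _ hx
    not_adj_F_B := fun hx hy => haF _ hx _ (Or.inl hy)
    not_adj_F_C := fun hx hy => haF _ hx _ (Or.inr hy) }⟩
  · intro v
    have hv : v ∈ A ∪ (⋃ i, B i) ∪ (⋃ i, C i) ∪ F := hcover ▸ Set.mem_univ v
    simp only [Set.mem_union, Set.mem_iUnion] at hv
    rcases hv with ((hv | hv) | hv) | hv
    exacts [Or.inl hv, Or.inr (Or.inl hv), Or.inr (Or.inr (Or.inl hv)), Or.inr (Or.inr (Or.inr hv))]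
  · intro a a' ha ha'
    refine (hnest a ha a' ha').imp (fun h b hb hab => (h ⟨hab, hb⟩).1)
      (fun h b hb hab => (h ⟨hab, hb⟩).1)

namespace FiveBasketPartition

variable {Q : SimpleGraph W} (K : FiveBasketPartition Q) {n : ℕ}

lemma isClique_A_union_F : Q.IsClique (K.A ∪ K.F) :=
  isClique_union_of_adj K.isClique_A K.isClique_F fun _ ha _ hf _ => (K.adj_F_A hf ha).symm

lemma isClique_B_union_C (i : Fin 3) : Q.IsClique (K.B i ∪ K.C i) :=
  isClique_union_of_adj (K.isClique_B i) (K.isClique_C i) fun _ hb _ hc _ => K.adj_B_C hb hc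

lemma adj_of_mem_C {i j : Fin 3} {x y : W} (hx : x ∈ K.C i) (hy : y ∈ K.C j) (hxy : x ≠ y) :
    Q.Adj x y := by
  rcases eq_or_ne i j with rfl | hij
  exacts [K.isClique_C i hx hy hxy, K.adj_C_C hij hx hy]

lemma isClique_iUnion_C : Q.IsClique (⋃ i, K.C i) := by
  intro x hx y hy hxy
  obtain ⟨i, hx⟩ := Set.mem_iUnion.1 hx
  obtain ⟨j, hy⟩ := Set.mem_iUnion.1 hy
  exact K.adj_of_mem_C hx hy hxy

lemma eq_of_adj_B_B {i j : Fin 3} {x y : W} (hx : x ∈ K.B i) (hy : y ∈ K.B j) (h : Q.Adj x y) :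
    i = j :=
  by_contra fun hij => K.not_adj_B_B hij hx hy h

lemma eq_of_adj_B_C {i j : Fin 3} {x y : W} (hx : x ∈ K.B i) (hy : y ∈ K.C j) (h : Q.Adj x y) :
    i = j :=
  by_contra fun hij => K.not_adj_B_C hij hx hy h

lemma eq_istar_of_not_adj_A_B {i : Fin 3} {a b : W} (ha : a ∈ K.A) (hb : b ∈ K.B i)
    (h : ¬Q.Adj a b) : i = K.istar :=
  by_contra fun hi => h (K.adj_A_B hi ha hb)

lemma ne_jstar_of_adj_F_B {i : Fin 3} {f b : W} (hf : f ∈ K.F) (hb : b ∈ K.B i) (h : Q.Adj f b) :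
    i ≠ K.jstar := by
  rintro rfl
  exact K.not_adj_F_B hf hb h

lemma ne_jstar_of_adj_F_C {i : Fin 3} {f c : W} (hf : f ∈ K.F) (hc : c ∈ K.C i) (h : Q.Adj f c) :
    i ≠ K.jstar := by
  rintro rfl
  exact K.not_adj_F_C hf hc h

lemma exists_adj_A_of_mem_B {i : Fin 3} {b : W} (hb : b ∈ K.B i) : ∃ a ∈ K.A, Q.Adj a b := by
  rcases eq_or_ne i K.istar with rfl | hi
  · obtain ⟨a, ha, hab⟩ := K.exists_adj_B_istar
    exact ⟨a, ha, hab b hb⟩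
  · obtain ⟨a, ha⟩ := K.nonempty_A
    exact ⟨a, ha, K.adj_A_B hi ha hb⟩

lemma adj_of_crossing {a a' b b' : W} (ha : a ∈ K.A) (ha' : a' ∈ K.A) (hb : b ∈ K.B K.istar)
    (hb' : b' ∈ K.B K.istar) (hab : Q.Adj a b) (ha'b' : Q.Adj a' b') (hab' : ¬Q.Adj a b') :
    Q.Adj a' b := by
  rcases K.nested ha ha' with h | h
  exacts [h b hb hab, absurd (h b' hb' ha'b') hab']

lemma mem_of_adj_A {a v : W} (ha : a ∈ K.A) (h : Q.Adj a v) :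
    v ∈ K.A ∨ (∃ j, v ∈ K.B j) ∨ v ∈ K.F := by
  rcases K.mem_cover v with hv | hv | ⟨j, hv⟩ | hv
  exacts [Or.inl hv, Or.inr (Or.inl hv), absurd h (K.not_adj_A_C ha hv), Or.inr (Or.inr hv)]

lemma mem_of_adj_B {i : Fin 3} {b v : W} (hb : b ∈ K.B i) (h : Q.Adj b v) :
    v ∈ K.A ∨ v ∈ K.B i ∨ v ∈ K.C i ∨ v ∈ K.F := by
  rcases K.mem_cover v with hv | ⟨j, hv⟩ | ⟨j, hv⟩ | hv
  · exact Or.inl hv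
  · exact Or.inr (Or.inl (K.eq_of_adj_B_B hb hv h ▸ hv))
  · exact Or.inr (Or.inr (Or.inl (K.eq_of_adj_B_C hb hv h ▸ hv)))
  · exact Or.inr (Or.inr (Or.inr hv))

lemma mem_of_adj_C {i : Fin 3} {c v : W} (hc : c ∈ K.C i) (h : Q.Adj c v) :
    v ∈ K.B i ∨ (∃ j, v ∈ K.C j) ∨ v ∈ K.F := by
  rcases K.mem_cover v with hv | ⟨j, hv⟩ | hv | hv
  · exact absurd h.symm (K.not_adj_A_C hv hc)
  · exact Or.inl (K.eq_of_adj_B_C hv hc h.symm ▸ hv)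
  exacts [Or.inr (Or.inl hv), Or.inr (Or.inr hv)]

lemma mem_of_compl_adj_A {a v : W} (ha : a ∈ K.A) (h : Qᶜ.Adj a v) :
    v ∈ K.B K.istar ∨ ∃ j, v ∈ K.C j := by
  rw [compl_adj] at h
  rcases K.mem_cover v with hv | ⟨j, hv⟩ | hv | hv
  · exact absurd (K.isClique_A ha hv h.1) h.2
  · exact Or.inl (K.eq_istar_of_not_adj_A_B ha hv h.2 ▸ hv)
  exacts [Or.inr hv, absurd (K.adj_F_A hv ha).symm h.2]

lemma mem_of_compl_adj_F {f v : W} (hf : f ∈ K.F) (h : Qᶜ.Adj f v) :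
    v ∈ K.B K.jstar ∪ K.C K.jstar := by
  rw [compl_adj] at h
  rcases K.mem_cover v with hv | ⟨j, hv⟩ | ⟨j, hv⟩ | hv
  · exact absurd (K.adj_F_A hf hv) h.2
  · exact Or.inl (not_ne_iff.1 (fun hj => h.2 (K.adj_F_B hj hf hv)) ▸ hv)
  · exact Or.inr (not_ne_iff.1 (fun hj => h.2 (K.adj_F_C hj hf hv)) ▸ hv)
  · exact absurd (K.isClique_F hf hv h.1) h.2

lemma indFree_fourK1 (K : FiveBasketPartition Q) : IndFree Q fourK1 := by
  refine ⟨fun e => ?_⟩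
  have hstable : ∀ x y, ¬Q.Adj (e x) (e y) := fun x y h => e.map_adj_iff.1 h
  have hit := exists_apply_mem_of_isClique_cover (G := Q) (e := e)
    (fun o : Option (Fin 3) => o.elim (K.A ∪ K.F) fun i => K.B i ∪ K.C i)
    (fun o => o.casesOn K.isClique_A_union_F K.isClique_B_union_C)
    (fun v => by
      rcases K.mem_cover v with hv | ⟨i, hv⟩ | ⟨i, hv⟩ | hv
      exacts [⟨none, Or.inl hv⟩, ⟨some i, Or.inl hv⟩, ⟨some i, Or.inr hv⟩, ⟨none, Or.inr hv⟩])
    (by simp)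
  obtain ⟨x, hxA | hxF⟩ := hit none
  · have hC : ∀ i, i ≠ K.istar → ∃ y, e y ∈ K.C i := fun i hi => by
      obtain ⟨y, hyB | hyC⟩ := hit (some i)
      exacts [absurd (K.adj_A_B hi hxA hyB) (hstable x y), ⟨y, hyC⟩]
    obtain ⟨y, hy⟩ := hC _ (fin_three_add_one_ne K.istar)
    obtain ⟨z, hz⟩ := hC _ (fin_three_add_two_ne K.istar)
    exact hstable y z (K.adj_C_C (fin_three_add_one_ne_add_two K.istar) hy hz)
  · obtain ⟨y, hyB | hyC⟩ := hit (some (K.jstar + 1))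
    exacts [hstable x y (K.adj_F_B (fin_three_add_one_ne _) hxF hyB),
      hstable x y (K.adj_F_C (fin_three_add_one_ne _) hxF hyC)]

lemma isClique_commonNeighbors_of_mem_F {f v : W} (hf : f ∈ K.F) (h : Qᶜ.Adj f v) :
    Q.IsClique (Q.commonNeighbors f v) := by
  rcases K.mem_of_compl_adj_F hf h with hv | hv
  · refine K.isClique_A.subset fun z hz => ?_
    obtain ⟨hfz, hvz⟩ := (mem_commonNeighbors Q).1 hz
    rcases K.mem_of_adj_B hv hvz with hz | hz | hz | hz
    exacts [hz, absurd hfz (K.not_adj_F_B hf hz), absurd hfz (K.not_adj_F_C hf hz),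
      absurd hvz.symm (K.not_adj_F_B hz hv)]
  · refine K.isClique_iUnion_C.subset fun z hz => ?_
    obtain ⟨hfz, hvz⟩ := (mem_commonNeighbors Q).1 hz
    rcases K.mem_of_adj_C hv hvz with hz | hz | hz
    exacts [absurd hfz (K.not_adj_F_B hf hz), Set.mem_iUnion.2 hz,
      absurd hvz.symm (K.not_adj_F_C hz hv)]

lemma isClique_commonNeighbors_of_mem_C_of_mem_A {i : Fin 3} {c a : W} (hc : c ∈ K.C i)
    (ha : a ∈ K.A) : Q.IsClique (Q.commonNeighbors c a) := by
  have hmem : ∀ z ∈ Q.commonNeighbors c a, z ∈ K.B i ∨ z ∈ K.F ∧ i ≠ K.jstar := by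
    intro z hz
    obtain ⟨hcz, haz⟩ := (mem_commonNeighbors Q).1 hz
    rcases K.mem_of_adj_C hc hcz with hz | ⟨j, hz⟩ | hz
    exacts [Or.inl hz, absurd haz (K.not_adj_A_C ha hz),
      Or.inr ⟨hz, K.ne_jstar_of_adj_F_C hz hc hcz.symm⟩]
  intro z hz w hw hzw
  rcases hmem z hz with hz | ⟨hz, hi⟩ <;> rcases hmem w hw with hw | ⟨hw, hi⟩
  exacts [K.isClique_B i hz hw hzw, (K.adj_F_B hi hw hz).symm, K.adj_F_B hi hz hw,
    K.isClique_F hz hw hzw]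

lemma isClique_commonNeighbors_of_mem_C_of_mem_B {i j : Fin 3} {c b : W} (hc : c ∈ K.C i)
    (hb : b ∈ K.B j) (hcb : ¬Q.Adj c b) : Q.IsClique (Q.commonNeighbors c b) := by
  have hij : i ≠ j := by
    rintro rfl
    exact hcb (K.adj_B_C hb hc).symm
  have hmem : ∀ z ∈ Q.commonNeighbors c b, z ∈ K.C j ∨ z ∈ K.F ∧ j ≠ K.jstar := by
    intro z hz
    obtain ⟨hcz, hbz⟩ := (mem_commonNeighbors Q).1 hz
    rcases K.mem_of_adj_B hb hbz with hz | hz | hz | hz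
    exacts [absurd hcz.symm (K.not_adj_A_C hz hc), absurd hcz.symm (K.not_adj_B_C hij.symm hz hc),
      Or.inl hz, Or.inr ⟨hz, K.ne_jstar_of_adj_F_B hz hb hbz.symm⟩]
  intro z hz w hw hzw
  rcases hmem z hz with hz | ⟨hz, hj⟩ <;> rcases hmem w hw with hw | ⟨hw, hj⟩
  exacts [K.isClique_C j hz hw hzw, (K.adj_F_C hj hw hz).symm, K.adj_F_C hj hz hw,
    K.isClique_F hz hw hzw]

lemma isClique_commonNeighbors_of_mem_A_of_mem_B {i : Fin 3} {a b : W} (ha : a ∈ K.A)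
    (hb : b ∈ K.B i) (hab : ¬Q.Adj a b) : Q.IsClique (Q.commonNeighbors a b) := by
  obtain rfl := K.eq_istar_of_not_adj_A_B ha hb hab
  have hmem : ∀ z ∈ Q.commonNeighbors a b,
      z ∈ K.A ∨ z ∈ K.B K.istar ∨ z ∈ K.F ∧ K.istar ≠ K.jstar := by
    intro z hz
    obtain ⟨haz, hbz⟩ := (mem_commonNeighbors Q).1 hz
    rcases K.mem_of_adj_B hb hbz with hz | hz | hz | hz
    exacts [Or.inl hz, Or.inr (Or.inl hz), absurd haz (K.not_adj_A_C ha hz),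
      Or.inr (Or.inr ⟨hz, K.ne_jstar_of_adj_F_B hz hb hbz.symm⟩)]
  intro z hz w hw hzw
  obtain ⟨haz, hbz⟩ := (mem_commonNeighbors Q).1 hz
  obtain ⟨haw, hbw⟩ := (mem_commonNeighbors Q).1 hw
  rcases hmem z hz with hz | hz | ⟨hz, hi⟩ <;> rcases hmem w hw with hw | hw | ⟨hw, hi⟩
  · exact K.isClique_A hz hw hzw
  · exact K.adj_of_crossing ha hz hw hb haw hbz.symm hab
  · exact (K.adj_F_A hw hz).symm
  · exact (K.adj_of_crossing ha hw hz hb haz hbw.symm hab).symm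
  · exact K.isClique_B _ hz hw hzw
  · exact (K.adj_F_B hi hw hz).symm
  · exact K.adj_F_A hz hw
  · exact K.adj_F_B hi hz hw
  · exact K.isClique_F hz hw hzw

lemma isClique_commonNeighbors_of_mem_B_of_mem_B {i j : Fin 3} {b b' : W} (hb : b ∈ K.B i)
    (hb' : b' ∈ K.B j) (h : Qᶜ.Adj b b') : Q.IsClique (Q.commonNeighbors b b') := by
  have hij : i ≠ j := by
    rintro rfl
    exact not_adj_of_compl_adj h (K.isClique_B i hb hb' h.ne)
  refine K.isClique_A_union_F.subset fun z hz => ?_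
  obtain ⟨hbz, hb'z⟩ := (mem_commonNeighbors Q).1 hz
  rcases K.mem_of_adj_B hb hbz with hz | hz | hz | hz
  exacts [Or.inl hz, absurd hb'z.symm (K.not_adj_B_B hij hz hb'),
    absurd hb'z (K.not_adj_B_C hij.symm hb' hz), Or.inr hz]

theorem isClique_commonNeighbors (K : FiveBasketPartition Q) {x y : W} (h : Qᶜ.Adj x y) :
    Q.IsClique (Q.commonNeighbors x y) := by
  obtain ⟨hne, hxy⟩ := (compl_adj Q x y).1 h
  have hyx : ¬Q.Adj y x := fun h => hxy h.symm
  by_cases hxF : x ∈ K.F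
  · exact K.isClique_commonNeighbors_of_mem_F hxF h
  by_cases hyF : y ∈ K.F
  · exact commonNeighbors_symm Q x y ▸ K.isClique_commonNeighbors_of_mem_F hyF h.symm
  rcases K.mem_cover x with hx | ⟨i, hx⟩ | ⟨i, hx⟩ | hx
  · rcases K.mem_cover y with hy | ⟨j, hy⟩ | ⟨j, hy⟩ | hy
    · exact absurd (K.isClique_A hx hy hne) hxy
    · exact K.isClique_commonNeighbors_of_mem_A_of_mem_B hx hy hxy
    · exact commonNeighbors_symm Q x y ▸ K.isClique_commonNeighbors_of_mem_C_of_mem_A hy hx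
    · exact absurd hy hyF
  · rcases K.mem_cover y with hy | ⟨j, hy⟩ | ⟨j, hy⟩ | hy
    · exact commonNeighbors_symm Q x y ▸ K.isClique_commonNeighbors_of_mem_A_of_mem_B hy hx hyx
    · exact K.isClique_commonNeighbors_of_mem_B_of_mem_B hx hy h
    · exact commonNeighbors_symm Q x y ▸ K.isClique_commonNeighbors_of_mem_C_of_mem_B hy hx hyx
    · exact absurd hy hyF
  · rcases K.mem_cover y with hy | ⟨j, hy⟩ | ⟨j, hy⟩ | hy
    · exact K.isClique_commonNeighbors_of_mem_C_of_mem_A hx hy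
    · exact K.isClique_commonNeighbors_of_mem_C_of_mem_B hx hy hxy
    · exact absurd (K.adj_of_mem_C hx hy hne) hxy
    · exact absurd hy hyF
  · exact absurd hx hxF

lemma indFree_cycleG_four (K : FiveBasketPartition Q) : IndFree Q (cycleG 4) := by
  refine ⟨fun e => ?_⟩
  have hclique := K.isClique_commonNeighbors (x := e 0) (y := e 2)
    ((compl_adj Q _ _).2 ⟨e.injective.ne (by decide), e.map_adj_iff.not.2 (by decide)⟩)
  exact e.map_adj_iff.not.2 (by decide) <| hclique
    ((mem_commonNeighbors Q).2 ⟨e.map_adj_iff.2 (by decide), e.map_adj_iff.2 (by decide)⟩)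
    ((mem_commonNeighbors Q).2 ⟨e.map_adj_iff.2 (by decide), e.map_adj_iff.2 (by decide)⟩)
    (e.injective.ne (by decide) : e 1 ≠ e 3)

lemma mem_C_istar_of_compl_adj_A {a x y z : W} (ha : a ∈ K.A) (hx : Qᶜ.Adj a x)
    (hy : Qᶜ.Adj a y) (hz : Qᶜ.Adj a z) (hxy : Q.Adj x y) (hyz : Q.Adj y z) (hxz : Qᶜ.Adj x z) :
    y ∈ K.C K.istar ∧ (x ∈ K.B K.istar ∨ z ∈ K.B K.istar) := by
  obtain ⟨hxz_ne, hxz⟩ := (compl_adj Q x z).1 hxz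
  rcases K.mem_of_compl_adj_A ha hy with hyB | ⟨i, hyC⟩
  · have hBC : ∀ {v}, Qᶜ.Adj a v → Q.Adj y v → v ∈ K.B K.istar ∪ K.C K.istar := by
      intro v hv hyv
      rcases K.mem_of_compl_adj_A ha hv with hvB | ⟨j, hvC⟩
      exacts [Or.inl hvB, Or.inr (K.eq_of_adj_B_C hyB hvC hyv ▸ hvC)]
    exact absurd (K.isClique_B_union_C _ (hBC hx hxy.symm) (hBC hz hyz) hxz_ne) hxz
  · rcases K.mem_of_compl_adj_A ha hx with hxB | ⟨j, hxC⟩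
    · exact ⟨K.eq_of_adj_B_C hxB hyC hxy ▸ hyC, Or.inl hxB⟩
    rcases K.mem_of_compl_adj_A ha hz with hzB | ⟨k, hzC⟩
    · exact ⟨K.eq_of_adj_B_C hzB hyC hyz.symm ▸ hyC, Or.inr hzB⟩
    exact absurd (K.adj_of_mem_C hxC hzC hxz_ne) hxz

lemma cycle_not_mem_F (hn : 6 ≤ n) (e : cycleG n ↪g Q) (k : ZMod n) : e k ∉ K.F := by
  intro hk
  have h0 : cycleRotate e k (0 : ℕ) ∈ K.F := by simpa using hk
  have h24 := cycle_compl_adj (cycleRotate e k) 2 4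
  exact not_adj_of_compl_adj h24 <| K.isClique_B_union_C K.jstar
    (K.mem_of_compl_adj_F h0 (cycle_compl_adj _ 0 2))
    (K.mem_of_compl_adj_F h0 (cycle_compl_adj _ 0 4)) h24.ne

lemma exists_cycle_mem_A_or_F (hn : 5 ≤ n) (e : cycleG n ↪g Q) :
    ∃ k, e k ∈ K.A ∨ e k ∈ K.F := by
  by_contra! h
  have hC : ∀ m : ℕ, m + 2 < n → ∃ i, e (m + 1 : ℕ) ∈ K.C i := by
    intro m hm
    rcases K.mem_cover (e (m + 1 : ℕ)) with h1 | ⟨i, h1⟩ | h1 | h1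
    · exact absurd h1 (h _).1
    · have hBC : ∀ k, Q.Adj (e (m + 1 : ℕ)) (e k) → e k ∈ K.B i ∪ K.C i := by
        intro k hk
        rcases K.mem_of_adj_B h1 hk with hv | hv | hv | hv
        exacts [absurd hv (h k).1, Or.inl hv, Or.inr hv, absurd hv (h k).2]
      have hc := cycle_compl_adj e m (m + 2)
      exact absurd (K.isClique_B_union_C i (hBC _ (cycle_adj e m (m + 1)).symm)
        (hBC _ (cycle_adj e (m + 1) (m + 2))) hc.ne) (not_adj_of_compl_adj hc)
    · exact h1
    · exact absurd h1 (h _).2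
  obtain ⟨i, h1⟩ := hC 0 (by omega)
  obtain ⟨j, h3⟩ := hC 2 (by omega)
  have hc := cycle_compl_adj e (0 + 1) (2 + 1)
  exact not_adj_of_compl_adj hc (K.adj_of_mem_C h1 h3 hc.ne)

lemma cycle_two_not_mem_B_istar (hn : 6 ≤ n) (e : cycleG n ↪g Q) (h0 : e 0 ∈ K.A) :
    e 2 ∉ K.B K.istar := by
  intro h2
  replace h0 : e (0 : ℕ) ∈ K.A := by simpa using h0
  have h3 := (K.mem_C_istar_of_compl_adj_A h0 (cycle_compl_adj e 0 2) (cycle_compl_adj e 0 3)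
    (cycle_compl_adj e 0 4) (cycle_adj e 2 3) (cycle_adj e 3 4) (cycle_compl_adj e 2 4)).1
  have h13 := cycle_compl_adj e 1 3
  rcases K.mem_of_adj_A h0 (cycle_adj e 0 1) with h1 | ⟨m, h1⟩ | h1
  · have h4 := (K.mem_C_istar_of_compl_adj_A h1 h13 (cycle_compl_adj e 1 4)
      (cycle_compl_adj e 1 5) (cycle_adj e 3 4) (cycle_adj e 4 5) (cycle_compl_adj e 3 5)).1
    exact not_adj_of_compl_adj (cycle_compl_adj e 2 4) (K.adj_B_C h2 h4)
  · obtain rfl := K.eq_of_adj_B_B h1 h2 (cycle_adj e 1 2)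
    exact not_adj_of_compl_adj h13 (K.adj_B_C h1 h3)
  · exact K.cycle_not_mem_F hn e _ h1

theorem indFree_cycleG_of_six_le (K : FiveBasketPartition Q) (hn : 6 ≤ n) :
    IndFree Q (cycleG n) := by
  refine ⟨fun e => ?_⟩
  obtain ⟨k, hk⟩ := K.exists_cycle_mem_A_or_F (by omega) e
  have h0 : cycleRotate e k 0 ∈ K.A := by
    simpa using hk.resolve_right (K.cycle_not_mem_F hn e k)
  generalize cycleRotate e k = e at h0
  have h2 := K.cycle_two_not_mem_B_istar hn e h0
  have h2' : e (-2) ∉ K.B K.istar := by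
    simpa using K.cycle_two_not_mem_B_istar hn (cycleReflect e) (by simpa using h0)
  replace h0 : e (0 : ℕ) ∈ K.A := by simpa using h0
  have h03 := cycle_compl_adj e 0 3
  have h04 := cycle_compl_adj e 0 4
  have h34 := cycle_adj e 3 4
  have h4 : e (4 : ℕ) ∈ K.B K.istar := (K.mem_C_istar_of_compl_adj_A h0 (cycle_compl_adj e 0 2)
    h03 h04 (cycle_adj e 2 3) h34 (cycle_compl_adj e 2 4)).2.resolve_left h2
  -- For `n = 6`, `e 4 = e (-2)`; for `n ≥ 7`, `e 3 - e 4 - e 5` is a second `P₃` missed by `e 0`.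
  rcases hn.eq_or_lt with rfl | hn
  · exact h2' (by rwa [show (-2 : ZMod 6) = (4 : ℕ) by decide])
  · have h4' := (K.mem_C_istar_of_compl_adj_A h0 h03 h04 (cycle_compl_adj e 0 5) h34
      (cycle_adj e 4 5) (cycle_compl_adj e 3 5)).1
    exact (K.adj_B_C h4 h4').ne rfl

lemma exists_compl_adj_mem_C {v : W} (hv : ∀ i, v ∉ K.C i) : ∃ i, ∃ c ∈ K.C i, Qᶜ.Adj v c := by
  have compl_adj_of {i : Fin 3} {c : W} (hc : c ∈ K.C i) (h : ¬Q.Adj v c) : Qᶜ.Adj v c :=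
    (compl_adj Q v c).2 ⟨fun hvc => hv i (hvc ▸ hc), h⟩
  rcases K.mem_cover v with hvA | ⟨i, hvB⟩ | ⟨i, hvC⟩ | hvF
  · obtain ⟨c, hc⟩ := K.nonempty_C 0
    exact ⟨0, c, hc, compl_adj_of hc (K.not_adj_A_C hvA hc)⟩
  · obtain ⟨c, hc⟩ := K.nonempty_C (i + 1)
    exact ⟨i + 1, c, hc, compl_adj_of hc (K.not_adj_B_C (fin_three_add_one_ne i).symm hvB hc)⟩
  · exact absurd hvC (hv i)
  · obtain ⟨c, hc⟩ := K.nonempty_C K.jstar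
    exact ⟨K.jstar, c, hc, compl_adj_of hc (K.not_adj_F_C hvF hc)⟩

lemma compl_adj_A_C {i : Fin 3} {a c : W} (ha : a ∈ K.A) (hc : c ∈ K.C i) : Qᶜ.Adj a c :=
  (compl_adj Q a c).2 ⟨(K.disjoint_A_C i).ne_of_mem ha hc, K.not_adj_A_C ha hc⟩

lemma compl_connected (K : FiveBasketPartition Q) : Qᶜ.Connected := by
  obtain ⟨a, ha⟩ := K.nonempty_A
  have reach : ∀ v, Qᶜ.Reachable a v := by
    intro v
    by_cases hv : ∃ i, v ∈ K.C i
    · obtain ⟨i, hv⟩ := hv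
      exact (K.compl_adj_A_C ha hv).reachable
    · obtain ⟨i, c, hc, hvc⟩ := K.exists_compl_adj_mem_C (not_exists.1 hv)
      exact (K.compl_adj_A_C ha hc).reachable.trans hvc.symm.reachable
  exact (connected_iff _).2 ⟨fun u v => (reach u).symm.trans (reach v), ⟨a⟩⟩

lemma not_isUniversal (K : FiveBasketPartition Q) (v : W) : ¬IsUniversal Q v := by
  intro hv
  obtain ⟨w, hvw⟩ : ∃ w, Qᶜ.Adj v w := by
    by_cases hC : ∃ i, v ∈ K.C i
    · obtain ⟨i, hC⟩ := hC
      obtain ⟨a, ha⟩ := K.nonempty_A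
      exact ⟨a, (K.compl_adj_A_C ha hC).symm⟩
    · obtain ⟨i, c, -, hvc⟩ := K.exists_compl_adj_mem_C (not_exists.1 hC)
      exact ⟨c, hvc⟩
  obtain ⟨hne, hn⟩ := (compl_adj Q v w).1 hvw
  exact hn (hv w hne.symm)

lemma not_isSimplicial (K : FiveBasketPartition Q) (v : W) : ¬IsSimplicial Q v := by
  suffices ∃ x y, Q.Adj v x ∧ Q.Adj v y ∧ Qᶜ.Adj x y by
    obtain ⟨x, y, hx, hy, hxy⟩ := this
    exact fun hv => not_adj_of_compl_adj hxy (hv hx hy hxy.ne)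
  rcases K.mem_cover v with hvA | ⟨i, hvB⟩ | ⟨i, hvC⟩ | hvF
  · obtain ⟨b, hb⟩ := K.nonempty_B (K.istar + 1)
    obtain ⟨b', hb'⟩ := K.nonempty_B (K.istar + 2)
    have hne := fin_three_add_one_ne_add_two K.istar
    exact ⟨b, b', K.adj_A_B (fin_three_add_one_ne _) hvA hb,
      K.adj_A_B (fin_three_add_two_ne _) hvA hb',
      (compl_adj Q b b').2 ⟨(K.disjoint_B_B _ _ hne).ne_of_mem hb hb', K.not_adj_B_B hne hb hb'⟩⟩
  · obtain ⟨a, ha, hav⟩ := K.exists_adj_A_of_mem_B hvB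
    obtain ⟨c, hc⟩ := K.nonempty_C i
    exact ⟨a, c, hav.symm, K.adj_B_C hvB hc, K.compl_adj_A_C ha hc⟩
  · obtain ⟨b, hb⟩ := K.nonempty_B i
    obtain ⟨c, hc⟩ := K.nonempty_C (i + 1)
    have hne := (fin_three_add_one_ne i).symm
    exact ⟨b, c, (K.adj_B_C hb hvC).symm, K.adj_C_C hne hvC hc,
      (compl_adj Q b c).2 ⟨(K.disjoint_B_C _ _).ne_of_mem hb hc, K.not_adj_B_C hne hb hc⟩⟩
  · obtain ⟨a, ha⟩ := K.nonempty_A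
    obtain ⟨c, hc⟩ := K.nonempty_C (K.jstar + 1)
    exact ⟨a, c, K.adj_F_A hvF ha, K.adj_F_C (fin_three_add_one_ne _) hvF hc,
      K.compl_adj_A_C ha hc⟩

lemma nonempty_pentagon_embedding (K : FiveBasketPartition Q) : Nonempty (pentagon 3 ↪g Q) := by
  obtain ⟨a, ha, haB⟩ := K.exists_adj_B_istar
  choose b hb using K.nonempty_B
  choose c hc using K.nonempty_C
  have hab : ∀ i, Q.Adj a (b i) := fun i => by
    rcases eq_or_ne i K.istar with rfl | hi
    exacts [haB _ (hb _), K.adj_A_B hi ha (hb i)]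
  let f : Unit ⊕ Fin 3 ⊕ Fin 3 → W := Sum.elim (fun _ => a) (Sum.elim b c)
  have hf : ∀ x y, Q.Adj (f x) (f y) ↔ (pentagon 3).Adj x y := by
    rintro (_ | i | i) (_ | j | j) <;>
      simp only [f, pentagon, fromRel_adj, Sum.elim_inl, Sum.elim_inr, Sum.inl.injEq,
        Sum.inr.injEq, SimpleGraph.irrefl, ne_eq, reduceCtorEq, not_false_eq_true, true_and,
        and_true, and_false, and_self, or_true, or_false, false_or, or_self, iff_true, iff_false]
    · exact hab j
    · exact K.not_adj_A_C ha (hc j)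
    · exact (hab i).symm
    · rcases eq_or_ne i j with rfl | hij
      exacts [Q.irrefl, K.not_adj_B_B hij (hb i) (hb j)]
    · exact ⟨K.eq_of_adj_B_C (hb i) (hc j), by rintro rfl; exact K.adj_B_C (hb i) (hc i)⟩
    · exact fun h => K.not_adj_A_C ha (hc i) h.symm
    · exact ⟨fun h => K.eq_of_adj_B_C (hb j) (hc i) h.symm,
        by rintro rfl; exact (K.adj_B_C (hb j) (hc j)).symm⟩
    · exact ⟨by rintro h rfl; exact h.ne rfl, fun hij => K.adj_C_C hij (hc i) (hc j)⟩
  have hinj : Function.Injective f := by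
    rintro (_ | i | i) (_ | j | j) h <;>
      simp only [f, Sum.elim_inl, Sum.elim_inr, Sum.inl.injEq, Sum.inr.injEq, reduceCtorEq] at h ⊢
    · exact (hab j).ne h
    · exact (K.disjoint_A_C j).ne_of_mem ha (hc j) h
    · exact (hab i).ne h.symm
    · exact by_contra fun hij => (K.disjoint_B_B i j hij).ne_of_mem (hb i) (hb j) h
    · exact (K.disjoint_B_C i j).ne_of_mem (hb i) (hc j) h
    · exact (K.disjoint_A_C i).ne_of_mem ha (hc i) h.symm
    · exact (K.disjoint_B_C j i).ne_of_mem (hb j) (hc i) h.symm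
    · exact by_contra fun hij => (K.adj_C_C hij (hc i) (hc j)).ne h
  exact ⟨⟨⟨f, hinj⟩, hf _ _⟩⟩

end FiveBasketPartition

theorem statement_7_general {W : Type} (Q : SimpleGraph W)
    (hQ : IsFiveBasket Q) :
    (IndFree Q twoP3 ∧ IndFree Q (cycleG 4) ∧ IndFree Q (cycleG 6) ∧
      IndFree Q (cycleG 7) ∧ IndFree Q T0) ∧
    Nonempty (pentagon 3 ↪g Q) ∧
    Qᶜ.Connected ∧ (∀ v : W, ¬ IsSimplicial Q v) ∧ (∀ v : W, ¬ IsUniversal Q v) := by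
  obtain ⟨A, B, C, F, hpart⟩ := hQ
  obtain ⟨K⟩ := hpart.nonempty
  exact ⟨⟨K.indFree_fourK1.of_embedding fourK1EmbeddingTwoP3, K.indFree_cycleG_four,
      K.indFree_cycleG_of_six_le le_rfl, K.indFree_cycleG_of_six_le (by norm_num),
      K.indFree_fourK1.of_embedding fourK1EmbeddingT0⟩,
    K.nonempty_pentagon_embedding, K.compl_connected, K.not_isSimplicial, K.not_isUniversal⟩

theorem statement_7 {W : Type} [Fintype W] (Q : SimpleGraph W)
    (hQ : IsFiveBasket Q) :
    (IndFree Q twoP3 ∧ IndFree Q (cycleG 4) ∧ IndFree Q (cycleG 6) ∧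
      IndFree Q (cycleG 7) ∧ IndFree Q T0) ∧
    Nonempty (pentagon 3 ↪g Q) ∧
    Qᶜ.Connected ∧ (∀ v : W, ¬ IsSimplicial Q v) ∧ (∀ v : W, ¬ IsUniversal Q v) :=
  statement_7_general Q hQ

end Paper
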